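/- arXiv:1912.07912 — 2 statements merged into one kernel-verified Lean document; each statement's English description precedes it below -/
import Mathlib

section
/- Let K be a field of characteristic 0 with derivation δ and let P ∈ K[X_0,…,X_m] with separant s_P = ∂P/∂X_m. There exists a sequence of rational functions f_i (i ≥ 1) in the variables X_0,…,X_m, each of the form Q_i / s_P^{ℓ_i} for some polynomial Q_i over the differential subfield generated by the coefficients of P and some ℓ_i ∈ ℕ, such that for every a ∈ K with P(δ̄^m(a)) = 0 and s_P(δ̄^m(a)) ≠ 0, one has δ^{m+i}(a) = f_i(δ̄^m(a)) for all i ≥ 1. -/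
/-!
Differentiating `P(δ̄^m a) = 0` gives `s_P(δ̄^m a) · δ^{m+1} a + T(P)(δ̄^m a) = 0`, where
`T(R) = R^δ + ∑_{j<m} ∂R/∂X_j · X_{j+1}` and `R^δ` is `R` with `δ` applied to its coefficients;
so `δ^{m+1} a = -T(P)/s_P` at `δ̄^m a`. Feeding this back into the chain rule, the derivative of
any `R(δ̄^m a)` is `(s_P T(R) - ∂R/∂X_m · T(P)) / s_P`, and the quotient rule turns
`δ^{m+1+k} a = Q_k / s_P^{2k+1}` into the same shape for `k + 1`. The `Q_k` are built from `P`
by ring operations, partial derivatives and `δ` on coefficients, so their coefficients lie in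
every differential subfield containing those of `P`.
-/

open MvPolynomial

namespace MvPolynomial

variable {K σ : Type*} [CommRing K]

noncomputable def derivCoeffs (D : Derivation ℤ K K) : MvPolynomial σ K →+ MvPolynomial σ K :=
  AddMonoidAlgebra.coeffAddEquiv.symm.toAddMonoidHom.comp <|
    (Finsupp.mapRange.addMonoidHom D.toLinearMap.toAddMonoidHom).comp
      AddMonoidAlgebra.coeffAddEquiv.toAddMonoidHom

variable (D : Derivation ℤ K K)

@[simp]
lemma coeff_derivCoeffs (R : MvPolynomial σ K) (d : σ →₀ ℕ) :
    coeff d (derivCoeffs D R) = D (coeff d R) := rfl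

lemma derivCoeffs_C (c : K) : derivCoeffs D (C c : MvPolynomial σ K) = C (D c) := by
  classical
  ext d
  simp [coeff_C, apply_ite D]

lemma derivCoeffs_mul_X (R : MvPolynomial σ K) (j : σ) :
    derivCoeffs D (R * X j) = derivCoeffs D R * X j := by
  classical
  ext d
  simp [coeff_mul_X', apply_ite D]

end MvPolynomial

namespace Derivation

variable {K σ : Type*} [CommRing K] (D : Derivation ℤ K K)

theorem map_mvPolynomial_eval [Fintype σ] (v : σ → K) (R : MvPolynomial σ K) :
    D (eval v R) = eval v (derivCoeffs D R) + ∑ j, eval v (pderiv j R) * D (v j) := by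
  classical
  induction R using MvPolynomial.induction_on with
  | C c => simp [derivCoeffs_C]
  | add p q hp hq =>
    simp only [map_add, hp, hq, add_mul, Finset.sum_add_distrib]
    ring
  | mul_X p i hp =>
    simp only [map_mul, eval_X, leibniz, smul_eq_mul, hp, derivCoeffs_mul_X, pderiv_X, map_add,
      Pi.single_apply, apply_ite (eval v), map_zero, mul_ite, mul_one, mul_zero, ite_mul, zero_mul,
      add_mul, Finset.sum_add_distrib, Finset.sum_ite_eq, Finset.mem_univ, if_true, mul_assoc]
    rw [← Finset.mul_sum]
    ring

end Derivation

namespace RationalProlongation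

section Jet

variable {K : Type*} [CommRing K] (D : Derivation ℤ K K) {m : ℕ}

/-- The paper's `δ̄^m(a) = (a, δ a, …, δ^m a)`. -/
def jet (m : ℕ) (a : K) : Fin (m + 1) → K := fun j => D^[j] a

/-- The total derivative `T(R)`: the derivative of `R(δ̄^m a)` is `T(R)(δ̄^m a)` plus the
term `∂R/∂X_m · δ^{m+1} a`, which cannot be written in `δ̄^m a`. -/
noncomputable def totalDeriv (R : MvPolynomial (Fin (m + 1)) K) : MvPolynomial (Fin (m + 1)) K :=
  derivCoeffs D R + ∑ j : Fin m, pderiv j.castSucc R * X j.succ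

noncomputable def separant (P : MvPolynomial (Fin (m + 1)) K) : MvPolynomial (Fin (m + 1)) K :=
  pderiv (Fin.last m) P

theorem map_eval_jet (a : K) (R : MvPolynomial (Fin (m + 1)) K) :
    D (eval (jet D m a) R) =
      eval (jet D m a) (totalDeriv D R) + eval (jet D m a) (pderiv (Fin.last m) R) * D^[m + 1] a := by
  simp only [D.map_mvPolynomial_eval, Fin.sum_univ_castSucc, totalDeriv, map_add, map_sum, map_mul,
    eval_X, jet, Fin.val_castSucc, Fin.val_succ, Fin.val_last, ← Function.iterate_succ_apply' D]
  ring

variable (P : MvPolynomial (Fin (m + 1)) K)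

noncomputable def prolongDeriv (R : MvPolynomial (Fin (m + 1)) K) : MvPolynomial (Fin (m + 1)) K :=
  separant P * totalDeriv D R - pderiv (Fin.last m) R * totalDeriv D P

/-- The recursion is the quotient rule `map_eval_div_pow`. -/
noncomputable def prolongation : ℕ → MvPolynomial (Fin (m + 1)) K
  | 0 => -totalDeriv D P
  | k + 1 => separant P * prolongDeriv D P (prolongation k) -
      (2 * k + 1) • (prolongation k * prolongDeriv D P (separant P))

end Jet

section Solution

variable {K : Type*} [Field K] (D : Derivation ℤ K K) {m : ℕ} {P : MvPolynomial (Fin (m + 1)) K}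
  {a : K}

theorem iterate_succ_eq_div (hP : eval (jet D m a) P = 0)
    (hs : eval (jet D m a) (separant P) ≠ 0) :
    D^[m + 1] a = -eval (jet D m a) (totalDeriv D P) / eval (jet D m a) (separant P) := by
  have h := map_eval_jet D a P
  rw [hP, D.map_zero, ← separant] at h
  rw [eq_div_iff hs]
  linear_combination -h

theorem map_eval_jet_eq_div (hP : eval (jet D m a) P = 0)
    (hs : eval (jet D m a) (separant P) ≠ 0) (R : MvPolynomial (Fin (m + 1)) K) :
    D (eval (jet D m a) R) =
      eval (jet D m a) (prolongDeriv D P R) / eval (jet D m a) (separant P) := by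
  rw [map_eval_jet, iterate_succ_eq_div D hP hs, prolongDeriv, map_sub, map_mul, map_mul]
  field_simp
  ring

theorem map_eval_div_pow (hP : eval (jet D m a) P = 0)
    (hs : eval (jet D m a) (separant P) ≠ 0) (R : MvPolynomial (Fin (m + 1)) K) (n : ℕ) :
    D (eval (jet D m a) R / eval (jet D m a) (separant P) ^ n) =
      eval (jet D m a) (separant P * prolongDeriv D P R -
          n • (R * prolongDeriv D P (separant P))) /
        eval (jet D m a) (separant P) ^ (n + 2) := by
  rw [D.leibniz_div, D.leibniz_pow, map_eval_jet_eq_div D hP hs, map_eval_jet_eq_div D hP hs]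
  rcases n with _ | n <;>
    simp only [smul_eq_mul, nsmul_eq_mul, map_sub, map_mul, map_add, map_natCast, map_one,
      map_zero, Nat.cast_zero, Nat.cast_succ, zero_mul, add_tsub_cancel_right] <;>
    field_simp <;> ring

theorem iterate_eq_prolongation_div (hP : eval (jet D m a) P = 0)
    (hs : eval (jet D m a) (separant P) ≠ 0) (k : ℕ) :
    D^[m + 1 + k] a =
      eval (jet D m a) (prolongation D P k) / eval (jet D m a) (separant P) ^ (2 * k + 1) := by
  induction k with
  | zero => simpa [prolongation, neg_div] using iterate_succ_eq_div D hP hs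
  | succ k ih =>
    rw [← add_assoc, Function.iterate_succ_apply', ih, map_eval_div_pow D hP hs]
    rfl

end Solution

section Coefficients

variable {K σ : Type*} [CommRing K]

def coeffsInSubring (F : Subring K) : Subring (MvPolynomial σ K) where
  carrier := {R | ∀ d, coeff d R ∈ F}
  mul_mem' {R S} hR hS d := by
    classical
    rw [coeff_mul]
    exact sum_mem fun x _ => mul_mem (hR x.1) (hS x.2)
  one_mem' d := by
    classical
    rw [coeff_one]
    split_ifs
    exacts [F.one_mem, F.zero_mem]
  add_mem' {R S} hR hS d := by
    rw [coeff_add]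
    exact add_mem (hR d) (hS d)
  zero_mem' d := by simp
  neg_mem' {R} hR d := by
    rw [coeff_neg]
    exact neg_mem (hR d)

variable {F : Subring K}

theorem X_mem_coeffsInSubring (j : σ) : X j ∈ coeffsInSubring F := by
  classical
  intro d
  rw [coeff_X]
  split_ifs
  exacts [F.one_mem, F.zero_mem]

theorem pderiv_mem_coeffsInSubring {R : MvPolynomial σ K} (hR : R ∈ coeffsInSubring F) (j : σ) :
    pderiv j R ∈ coeffsInSubring F := fun d => by
  rw [coeff_pderiv]
  exact mul_mem (hR _) (by exact_mod_cast natCast_mem F _)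

variable (D : Derivation ℤ K K) (hF : ∀ x ∈ F, D x ∈ F)
include hF

theorem derivCoeffs_mem_coeffsInSubring {R : MvPolynomial σ K} (hR : R ∈ coeffsInSubring F) :
    derivCoeffs D R ∈ coeffsInSubring F := fun d => hF _ (hR d)

variable {m : ℕ} {P : MvPolynomial (Fin (m + 1)) K} (hP : P ∈ coeffsInSubring F)

theorem totalDeriv_mem_coeffsInSubring {R : MvPolynomial (Fin (m + 1)) K}
    (hR : R ∈ coeffsInSubring F) : totalDeriv D R ∈ coeffsInSubring F :=
  add_mem (derivCoeffs_mem_coeffsInSubring D hF hR) <| sum_mem fun _ _ =>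
    mul_mem (pderiv_mem_coeffsInSubring hR _) (X_mem_coeffsInSubring _)

include hP

theorem prolongDeriv_mem_coeffsInSubring {R : MvPolynomial (Fin (m + 1)) K}
    (hR : R ∈ coeffsInSubring F) : prolongDeriv D P R ∈ coeffsInSubring F :=
  sub_mem (mul_mem (pderiv_mem_coeffsInSubring hP _) (totalDeriv_mem_coeffsInSubring D hF hR))
    (mul_mem (pderiv_mem_coeffsInSubring hR _) (totalDeriv_mem_coeffsInSubring D hF hP))

theorem prolongation_mem_coeffsInSubring (k : ℕ) : prolongation D P k ∈ coeffsInSubring F := by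
  have hs : separant P ∈ coeffsInSubring F := pderiv_mem_coeffsInSubring hP (Fin.last m)
  induction k with
  | zero => exact neg_mem (totalDeriv_mem_coeffsInSubring D hF hP)
  | succ k ih =>
    exact sub_mem (mul_mem hs (prolongDeriv_mem_coeffsInSubring D hF hP ih))
      (nsmul_mem (mul_mem ih (prolongDeriv_mem_coeffsInSubring D hF hP hs)) _)

end Coefficients

end RationalProlongation

open RationalProlongation

theorem rational_prolongation_general {K : Type*} [Field K] (δ : K → K)
    (hadd : ∀ a b : K, δ (a + b) = δ a + δ b)
    (hleib : ∀ a b : K, δ (a * b) = δ a * b + a * δ b)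
    (m : ℕ) (P : MvPolynomial (Fin (m + 1)) K) :
    ∃ (Q : ℕ → MvPolynomial (Fin (m + 1)) K) (ℓ : ℕ → ℕ),
      (∀ (F : Subfield K), (∀ d, MvPolynomial.coeff d P ∈ F) → (∀ x ∈ F, δ x ∈ F) →
        ∀ i d, MvPolynomial.coeff d (Q i) ∈ F) ∧
      ∀ a : K,
        MvPolynomial.eval (fun j : Fin (m + 1) => δ^[(j : ℕ)] a) P = 0 →
        MvPolynomial.eval (fun j : Fin (m + 1) => δ^[(j : ℕ)] a)
            (MvPolynomial.pderiv (Fin.last m) P) ≠ 0 →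
        ∀ i : ℕ, 1 ≤ i →
          δ^[m + i] a =
            MvPolynomial.eval (fun j : Fin (m + 1) => δ^[(j : ℕ)] a) (Q i) /
              (MvPolynomial.eval (fun j : Fin (m + 1) => δ^[(j : ℕ)] a)
                  (MvPolynomial.pderiv (Fin.last m) P)) ^ (ℓ i) := by
  let D : Derivation ℤ K K :=
    Derivation.mk' (AddMonoidHom.mk' δ hadd).toIntLinearMap fun a b => by
      simp only [AddMonoidHom.coe_toIntLinearMap, AddMonoidHom.mk'_apply, hleib, smul_eq_mul]
      ring
  refine ⟨fun i => prolongation D P (i - 1), fun i => 2 * i - 1,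
    fun F hPF hF i => prolongation_mem_coeffsInSubring D (F := F.toSubring) hF hPF (i - 1), ?_⟩
  intro a hP hs i hi
  obtain ⟨k, rfl⟩ := Nat.exists_eq_add_of_le' hi
  beta_reduce
  rw [show m + (k + 1) = m + 1 + k by omega, show 2 * (k + 1) - 1 = 2 * k + 1 by omega,
    Nat.add_sub_cancel]
  exact iterate_eq_prolongation_div D hP hs k

/-- Rational prolongation along `P`: there are rational functions `f_i = Q_i / s_P^{ℓ_i}`,
with `Q_i` a polynomial whose coefficients lie in every subfield containing the
coefficients of `P` and closed under `δ`, such that whenever `P(δ̄^m a) = 0` and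
`s_P(δ̄^m a) ≠ 0`, one has `δ^{m+i} a = f_i(δ̄^m a)` for all `i ≥ 1`. -/
theorem rational_prolongation {K : Type*} [Field K] [CharZero K] (δ : K → K)
    (hadd : ∀ a b : K, δ (a + b) = δ a + δ b)
    (hleib : ∀ a b : K, δ (a * b) = δ a * b + a * δ b)
    (m : ℕ) (P : MvPolynomial (Fin (m + 1)) K) :
    ∃ (Q : ℕ → MvPolynomial (Fin (m + 1)) K) (ℓ : ℕ → ℕ),
      (∀ (F : Subfield K), (∀ d, MvPolynomial.coeff d P ∈ F) → (∀ x ∈ F, δ x ∈ F) →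
        ∀ i d, MvPolynomial.coeff d (Q i) ∈ F) ∧
      ∀ a : K,
        MvPolynomial.eval (fun j : Fin (m + 1) => δ^[(j : ℕ)] a) P = 0 →
        MvPolynomial.eval (fun j : Fin (m + 1) => δ^[(j : ℕ)] a)
            (MvPolynomial.pderiv (Fin.last m) P) ≠ 0 →
        ∀ i : ℕ, 1 ≤ i →
          δ^[m + i] a =
            MvPolynomial.eval (fun j : Fin (m + 1) => δ^[(j : ℕ)] a) (Q i) /
              (MvPolynomial.eval (fun j : Fin (m + 1) => δ^[(j : ℕ)] a)
                  (MvPolynomial.pderiv (Fin.last m) P)) ^ (ℓ i) :=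
  rational_prolongation_general δ hadd hleib m P
end

section
/- Let K ⊆ L be an extension of fields of characteristic 0 and let δ be a derivation on K. Then there exists a derivation δ' on L extending δ (i.e. δ'|_K = δ). -/
/-!
In characteristic 0 every field extension `L/K` is separable over a purely transcendental
subextension, hence formally smooth, so `H¹(L_{L/K}) = 0` and the Jacobi–Zariski sequence makes
`L ⊗_K Ω_K → Ω_L` injective. As a map of `L`-vector spaces it has a left inverse, through which
the `L`-linear map `L ⊗_K Ω_K → L` induced by `δ` extends to `Ω_L`, i.e. to a derivation of `L`.
-/

open KaehlerDifferential TensorProduct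

theorem Algebra.FormallySmooth.of_charZero (K L : Type*) [Field K] [Field L] [CharZero K]
    [Algebra K L] : Algebra.FormallySmooth K L := by
  obtain ⟨s, hs⟩ := exists_isTranscendenceBasis K L
  have := hs.isAlgebraic_field
  exact .of_algebraicIndependent_of_isSeparable hs.1

theorem KaehlerDifferential.mapBaseChange_injective (R A B : Type*) [CommRing R] [CommRing A]
    [CommRing B] [Algebra R A] [Algebra R B] [Algebra A B] [IsScalarTower R A B]
    [Subsingleton (Algebra.H1Cotangent A B)] :
    Function.Injective (mapBaseChange R A B) := by
  rw [injective_iff_map_eq_zero]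
  intro x hx
  obtain ⟨y, rfl⟩ := (Algebra.H1Cotangent.exact_δ_mapBaseChange R A B x).mp hx
  rw [Subsingleton.elim y 0, map_zero]

theorem Derivation.exists_compAlgebraMap_eq {R A L M : Type*} [CommRing R] [CommRing A]
    [Field L] [Algebra R A] [Algebra R L] [Algebra A L] [IsScalarTower R A L]
    [AddCommGroup M] [Module A M] [Module L M] [Module R M] [IsScalarTower A L M]
    [IsScalarTower R A M] [IsScalarTower R L M]
    [Subsingleton (Algebra.H1Cotangent A L)] (d : Derivation R A M) :
    ∃ d' : Derivation R L M, d'.compAlgebraMap A = d := by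
  obtain ⟨g, hg⟩ := (mapBaseChange R A L).exists_leftInverse_of_injective
    (LinearMap.ker_eq_bot.mpr (mapBaseChange_injective R A L))
  refine ⟨((d.liftKaehlerDifferential.liftBaseChange L).comp g).compDer (D R L), ?_⟩
  ext a
  have hD : D R L (algebraMap A L a) = mapBaseChange R A L (1 ⊗ₜ D R A a) := by
    rw [mapBaseChange_tmul, one_smul, map_D]
  rw [compAlgebraMap_apply, coe_comp, LinearMap.coe_comp, Function.comp_apply,
    LinearMap.coe_restrictScalars, coeFn_coe, hD, LinearMap.comp_apply,
    ← LinearMap.comp_apply g, hg, LinearMap.id_apply, LinearMap.liftBaseChange_one_tmul,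
    liftKaehlerDifferential_comp_D]

/-- In characteristic 0, every derivation on a field extends to any field extension. -/
theorem derivation_extends {K L : Type*} [Field K] [Field L] [CharZero K] [Algebra K L]
    (δ : K → K)
    (hadd : ∀ a b : K, δ (a + b) = δ a + δ b)
    (hleib : ∀ a b : K, δ (a * b) = δ a * b + a * δ b) :
    ∃ δ' : L → L,
      (∀ x y : L, δ' (x + y) = δ' x + δ' y) ∧
      (∀ x y : L, δ' (x * y) = δ' x * y + x * δ' y) ∧
      (∀ a : K, δ' (algebraMap K L a) = algebraMap K L (δ a)) := by
  let D : Derivation ℤ K K := .mk' (AddMonoidHom.mk' δ hadd).toIntLinearMap fun a b => by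
    simp only [AddMonoidHom.coe_toIntLinearMap, AddMonoidHom.mk'_apply, hleib, smul_eq_mul]
    ring
  have := Algebra.FormallySmooth.of_charZero K L
  obtain ⟨D', hD'⟩ := ((Algebra.linearMap K L).compDer D).exists_compAlgebraMap_eq (L := L)
  refine ⟨D', D'.map_add, fun x y => ?_, fun a => congr($hD' a)⟩
  rw [D'.leibniz, smul_eq_mul, smul_eq_mul, add_comm, mul_comm y]
end
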